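/- arXiv:2003.05041 — 5 statements merged into one kernel-verified Lean document; each statement's English description precedes it below -/
import Mathlib

section
/- Let F be a field of characteristic zero, n ≥ 2, and let A(λ) ∈ M_{n×n}(F[λ]) be a matrix of rank at least n−1 with Smith normal form S(λ) = diag(s_1(λ), ..., s_{n−1}(λ), s_n(λ)). Suppose s_{n−1}(λ) = (λ−α_1)^{k_1}(λ−α_2)^{k_2}···(λ−α_r)^{k_r}, where α_1, ..., α_r ∈ F are pairwise distinct and k_i ≥ 1. Then for every i = 1, ..., r and every j with 0 ≤ j ≤ k_i − 1, the j-th entrywise formal derivative of the adjugate matrix A*(λ) evaluated at α_i is the zero matrix. -/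
open Polynomial

/-- **Corollary 2.1.** Let `F` have characteristic zero, `n ≥ 2`, and let `A(λ)` be an
`n × n` polynomial matrix of rank `≥ n - 1` with Smith normal form
`diag(s₁, …, s_{n-1}, sₙ)` (so `s₁, …, s_{n-1}` are monic). If
`s_{n-1}(λ) = (λ - α₁)^{k₁} ⋯ (λ - α_r)^{k_r}` with the `αᵢ ∈ F` pairwise distinct,
then for every `i` and every `0 ≤ j ≤ kᵢ - 1` the `j`-th entrywise formal derivative of
the adjugate `A*(λ)` vanishes at `αᵢ`. -/
theorem adjugate_derivatives_vanish_at_roots_of_penultimate_invariant_factor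
    {F : Type*} [Field F] [CharZero F] {n r : ℕ} (hn : 2 ≤ n)
    (A : Matrix (Fin n) (Fin n) F[X]) (s : Fin n → F[X])
    (hmonic : ∀ i : Fin n, (i : ℕ) < n - 1 → (s i).Monic)
    (hchain : ∀ i j : Fin n, i ≤ j → s i ∣ s j)
    (hsmith : ∃ U V : Matrix (Fin n) (Fin n) F[X],
      IsUnit U.det ∧ IsUnit V.det ∧ U * A * V = Matrix.diagonal s)
    (α : Fin r → F) (hα : Function.Injective α)
    (k : Fin r → ℕ) (hk : ∀ i, 1 ≤ k i)
    (hfact : s ⟨n - 2, by omega⟩ = ∏ i, (X - Polynomial.C (α i)) ^ k i) :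
    ∀ i : Fin r, ∀ j < k i, ∀ p q : Fin n,
      ((fun f => derivative f)^[j] (A.adjugate p q)).eval (α i) = 0 := by
  obtain ⟨U, V, hU, hV, hUV⟩ := hsmith
  set t : F[X] := s ⟨n - 2, by omega⟩ with ht
  -- t divides every entry of adjugate (diagonal s)
  have hdiag : ∀ p q : Fin n, t ∣ (Matrix.diagonal s).adjugate p q := by
    intro p q
    rw [Matrix.adjugate_diagonal]
    rcases eq_or_ne p q with rfl | hpq
    · rw [Matrix.diagonal_apply_eq]
      by_cases hp : p = ⟨n - 2, by omega⟩
      · -- product over erase p contains the last index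
        have hlast : (⟨n - 1, by omega⟩ : Fin n) ∈ Finset.univ.erase p := by
          refine Finset.mem_erase.2 ⟨?_, Finset.mem_univ _⟩
          subst hp
          intro h
          have := congrArg Fin.val h
          simp at this
          omega
        exact (hchain _ _ (by subst hp; exact Fin.mk_le_mk.2 (by omega))).trans
          (Finset.dvd_prod_of_mem s hlast)
      · have hmem : (⟨n - 2, by omega⟩ : Fin n) ∈ Finset.univ.erase p :=
          Finset.mem_erase.2 ⟨fun h => hp h.symm, Finset.mem_univ _⟩
        exact Finset.dvd_prod_of_mem s hmem
    · rw [Matrix.diagonal_apply_ne _ hpq]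
      exact dvd_zero t
  -- A = ⅟U * diagonal s * ⅟V, so adjugate A = adjugate ⅟V * adjugate (diag s) * adjugate ⅟U
  have : Invertible U := U.invertibleOfIsUnitDet hU
  have : Invertible V := V.invertibleOfIsUnitDet hV
  have hA : A = ⅟U * Matrix.diagonal s * ⅟V := by
    have h1 : U * A * V * ⅟V = Matrix.diagonal s * ⅟V := by rw [hUV]
    rw [Matrix.mul_assoc, mul_invOf_self, Matrix.mul_one] at h1
    have h2 : ⅟U * (U * A) = ⅟U * (Matrix.diagonal s * ⅟V) := by rw [h1]
    rwa [← Matrix.mul_assoc, invOf_mul_self, Matrix.one_mul,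
      ← Matrix.mul_assoc] at h2
  have hadj : ∀ p q : Fin n, t ∣ A.adjugate p q := by
    intro p q
    rw [hA, Matrix.adjugate_mul_distrib, Matrix.adjugate_mul_distrib]
    rw [Matrix.mul_apply]
    refine Finset.dvd_sum fun b _ => ?_
    rw [Matrix.mul_apply, Finset.mul_sum]
    refine Finset.dvd_sum fun c _ => ?_
    exact ((hdiag b c).mul_right _).mul_left _
  intro i j hj p q
  have hpowt : (X - C (α i)) ^ k i ∣ t := by
    rw [hfact]
    exact Finset.dvd_prod_of_mem (fun i => (X - C (α i)) ^ k i) (Finset.mem_univ i)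
  have hpow : (X - C (α i)) ^ k i ∣ A.adjugate p q := hpowt.trans (hadj p q)
  have hd : (X - C (α i)) ^ (k i - j) ∣ derivative^[j] (A.adjugate p q) :=
    Polynomial.pow_sub_dvd_iterate_derivative_of_pow_dvd j hpow
  have hd1 : (X - C (α i)) ∣ derivative^[j] (A.adjugate p q) :=
    (dvd_pow_self _ (by omega : k i - j ≠ 0)).trans hd
  obtain ⟨g, hg⟩ := hd1
  simp [hg]
end

section
/- Let F be a field of characteristic zero and let A(λ), B(λ) ∈ M_{n×n}(F[λ]) be nonsingular matrices that are equivalent, with common Smith normal form S(λ) = diag(s_1(λ), ..., s_{n−1}(λ), s_n(λ)), where s_n(λ) = (λ−α_1)^{k_1}···(λ−α_r)^{k_r} with α_1, ..., α_r ∈ F pairwise distinct. Let d(λ) = s_1(λ)···s_{n−1}(λ) and let C(λ) be the matrix with B*(λ) = d(λ)·C(λ), where B*(λ) is the adjugate of B(λ). If V ∈ M_{n×n}(F) is a constant matrix with det V ≠ 0 such that s_n(λ) divides every entry of C(λ)·V·A(λ), then there exists an invertible matrix Q(λ) ∈ GL(n, F[λ]) such that V·A(λ) = B(λ)·Q(λ).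 -/
open Polynomial

/-- (From the proof of Theorem 3.1.) Let `F` be a field of characteristic zero and let
`A(λ), B(λ)` be nonsingular `n × n` polynomial matrices that are equivalent, with common
Smith normal form `diag(s₁, …, sₙ)`, where `sₙ = (λ - α₁)^{k₁} ⋯ (λ - α_r)^{k_r}` with
the `αᵢ` pairwise distinct. Let `d = s₁ ⋯ s_{n-1}` and write `B*(λ) = d(λ)·C(λ)`.
If `V` is a constant matrix with `det V ≠ 0` such that `sₙ(λ)` divides every entry of
`C(λ)·V·A(λ)`, then `V·A(λ) = B(λ)·Q(λ)` for some `Q(λ) ∈ GL(n, F[λ])`. -/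
theorem nonsingular_solution_gives_factorization
    {F : Type*} [Field F] [CharZero F] {n r : ℕ} (hn : 1 ≤ n)
    (A B : Matrix (Fin n) (Fin n) F[X]) (hA : A.det ≠ 0) (hB : B.det ≠ 0)
    (s : Fin n → F[X]) (hmonic : ∀ i, (s i).Monic)
    (hchain : ∀ i j : Fin n, i ≤ j → s i ∣ s j)
    (hsmithA : ∃ U V : Matrix (Fin n) (Fin n) F[X],
      IsUnit U.det ∧ IsUnit V.det ∧ U * A * V = Matrix.diagonal s)
    (hsmithB : ∃ U V : Matrix (Fin n) (Fin n) F[X],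
      IsUnit U.det ∧ IsUnit V.det ∧ U * B * V = Matrix.diagonal s)
    (α : Fin r → F) (hα : Function.Injective α)
    (k : Fin r → ℕ) (hk : ∀ i, 1 ≤ k i)
    (hfact : s ⟨n - 1, by omega⟩ = ∏ i, (X - Polynomial.C (α i)) ^ k i)
    (d : F[X]) (hd : d = ∏ i ∈ Finset.univ.filter (fun i : Fin n => (i : ℕ) < n - 1), s i)
    (Cm : Matrix (Fin n) (Fin n) F[X]) (hCm : ∀ p q, B.adjugate p q = d * Cm p q)
    (V : Matrix (Fin n) (Fin n) F) (hV : V.det ≠ 0)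
    (hdvd : ∀ p q : Fin n, s ⟨n - 1, by omega⟩ ∣ (Cm * V.map Polynomial.C * A) p q) :
    ∃ Q : Matrix (Fin n) (Fin n) F[X], IsUnit Q.det ∧
      V.map Polynomial.C * A = B * Q := by

  classical
  set sn := s ⟨n - 1, by omega⟩ with hsn
  obtain ⟨UA, VA, hUA, hVA, hA1⟩ := hsmithA
  obtain ⟨UB, VB, hUB, hVB, hB1⟩ := hsmithB
  have hprod : ∏ i, s i = d * sn := by
    rw [hd, ← Finset.prod_filter_mul_prod_filter_not Finset.univ
      (fun i : Fin n => (i : ℕ) < n - 1)]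
    congr 1
    have hset : Finset.univ.filter (fun i : Fin n => ¬ (i : ℕ) < n - 1)
        = {(⟨n - 1, by omega⟩ : Fin n)} := by
      ext i
      simp only [Finset.mem_filter, Finset.mem_univ, true_and, Finset.mem_singleton]
      have := i.2
      constructor
      · intro h
        apply Fin.ext
        show (i : ℕ) = n - 1
        omega
      · intro h; subst h; simp
    rw [hset, Finset.prod_singleton]
  have hdetA : UA.det * A.det * VA.det = d * sn := by
    rw [← hprod, ← Matrix.det_diagonal, ← hA1, Matrix.det_mul, Matrix.det_mul]
  have hdetB : UB.det * B.det * VB.det = d * sn := by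
    rw [← hprod, ← Matrix.det_diagonal, ← hB1, Matrix.det_mul, Matrix.det_mul]
  choose T hT using hdvd
  set Vc := V.map (Polynomial.C : F →+* F[X]) with hVc
  set e := UB.det * VB.det with he_def
  have he : IsUnit e := hUB.mul hVB
  have hBe : e * B.det = d * sn := by rw [← hdetB]; ring
  have hadj : B.adjugate = d • Cm := by
    refine Matrix.ext fun p q => ?_
    simp [hCm, Matrix.smul_apply, smul_eq_mul]
  have hCVA : Cm * Vc * A = sn • Matrix.of T := by
    refine Matrix.ext fun p q => ?_
    simpa [Matrix.smul_apply, smul_eq_mul] using hT p q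
  refine ⟨e • Matrix.of T, ?_, ?_⟩
  case _ =>
    -- main identity first
    have key : B.det • (Vc * A) = B.det • (B * (e • Matrix.of T)) := by
      calc B.det • (Vc * A) = (B.det • (1 : Matrix (Fin n) (Fin n) F[X])) * Vc * A := by
            rw [Matrix.smul_mul, Matrix.smul_mul, Matrix.one_mul]
        _ = B * B.adjugate * Vc * A := by rw [Matrix.mul_adjugate]
        _ = B * (d • Cm) * Vc * A := by rw [hadj]
        _ = d • (B * (Cm * Vc * A)) := by
            rw [Matrix.mul_smul, Matrix.smul_mul, Matrix.smul_mul]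
            rw [Matrix.mul_assoc, Matrix.mul_assoc, ← Matrix.mul_assoc Cm Vc A]
        _ = d • (sn • (B * Matrix.of T)) := by rw [hCVA, Matrix.mul_smul]
        _ = (d * sn) • (B * Matrix.of T) := by rw [smul_smul]
        _ = (e * B.det) • (B * Matrix.of T) := by rw [hBe]
        _ = B.det • (B * (e • Matrix.of T)) := by
            rw [Matrix.mul_smul, smul_smul, mul_comm e B.det]
    have hBQ : Vc * A = B * (e • Matrix.of T) := by
      refine Matrix.ext fun p q => ?_
      have := congrArg (fun M : Matrix (Fin n) (Fin n) F[X] => M p q) key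
      simp only [Matrix.smul_apply, smul_eq_mul] at this
      exact mul_left_cancel₀ hB this
    -- determinant is a unit
    have hdetVc : Vc.det = Polynomial.C V.det := by
      rw [hVc]; exact (RingHom.map_det (Polynomial.C : F →+* F[X]) V).symm
    have hdQ : B.det * (e • Matrix.of T : Matrix (Fin n) (Fin n) F[X]).det
        = Vc.det * A.det := by
      rw [← Matrix.det_mul, ← hBQ, Matrix.det_mul]
    set a := UA.det * VA.det with ha_def
    have ha : IsUnit a := hUA.mul hVA
    have hAe : a * A.det = e * B.det := by
      have h12 : UA.det * A.det * VA.det = UB.det * B.det * VB.det := by rw [hdetA, hdetB]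
      calc a * A.det = UA.det * A.det * VA.det := by rw [ha_def]; ring
        _ = UB.det * B.det * VB.det := h12
        _ = e * B.det := by rw [he_def]; ring
    have hcancel : a * (e • Matrix.of T : Matrix (Fin n) (Fin n) F[X]).det
        = Vc.det * e := by
      apply mul_left_cancel₀ hB
      calc B.det * (a * (e • Matrix.of T : Matrix (Fin n) (Fin n) F[X]).det)
          = a * (B.det * (e • Matrix.of T : Matrix (Fin n) (Fin n) F[X]).det) := by ring
        _ = a * (Vc.det * A.det) := by rw [hdQ]
        _ = Vc.det * (a * A.det) := by ring
        _ = Vc.det * (e * B.det) := by rw [hAe]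
        _ = B.det * (Vc.det * e) := by ring
    have hunit : IsUnit (a * (e • Matrix.of T : Matrix (Fin n) (Fin n) F[X]).det) := by
      rw [hcancel, hdetVc]
      exact (Polynomial.isUnit_C.mpr (isUnit_iff_ne_zero.mpr hV)).mul he
    exact isUnit_of_mul_isUnit_right hunit
  case _ =>
    have key : B.det • (Vc * A) = B.det • (B * (e • Matrix.of T)) := by
      calc B.det • (Vc * A) = (B.det • (1 : Matrix (Fin n) (Fin n) F[X])) * Vc * A := by
            rw [Matrix.smul_mul, Matrix.smul_mul, Matrix.one_mul]
        _ = B * B.adjugate * Vc * A := by rw [Matrix.mul_adjugate]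
        _ = B * (d • Cm) * Vc * A := by rw [hadj]
        _ = d • (B * (Cm * Vc * A)) := by
            rw [Matrix.mul_smul, Matrix.smul_mul, Matrix.smul_mul]
            rw [Matrix.mul_assoc, Matrix.mul_assoc, ← Matrix.mul_assoc Cm Vc A]
        _ = d • (sn • (B * Matrix.of T)) := by rw [hCVA, Matrix.mul_smul]
        _ = (d * sn) • (B * Matrix.of T) := by rw [smul_smul]
        _ = (e * B.det) • (B * Matrix.of T) := by rw [hBe]
        _ = B.det • (B * (e • Matrix.of T)) := by
            rw [Matrix.mul_smul, smul_smul, mul_comm e B.det]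
    refine Matrix.ext fun p q => ?_
    have := congrArg (fun M : Matrix (Fin n) (Fin n) F[X] => M p q) key
    simp only [Matrix.smul_apply, smul_eq_mul] at this
    exact mul_left_cancel₀ hB this
end

section
/- Let A(λ) = I_n·λ^r + A_1·λ^{r−1} + ... + A_r and B(λ) = I_n·λ^r + B_1·λ^{r−1} + ... + B_r be monic n×n matrix polynomials of degree r over ℂ. Then the families {A_1, ..., A_r} and {B_1, ..., B_r} are similar over ℂ (i.e. there exists T ∈ GL(n, ℂ) with A_i = T·B_i·T^{−1} for all i = 1, ..., r) if and only if the matrix polynomials A(λ) and B(λ) are semi-scalar equivalent. -/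
/-!
Under `matPolyEquiv`, `A(λ)` and `B(λ)` become monic polynomials of degree `r` with matrix
coefficients. If `A = P B Q` with `P` constant and invertible, then `deg A = deg B + deg Q`
(because `B` is monic), so `Q` is a constant matrix; comparing the leading coefficients gives
`P Q = 1`, and the other coefficients give `Aᵢ = P Bᵢ P⁻¹`. Conversely, `T B(λ) T⁻¹` has
coefficients `T Bᵢ T⁻¹`.
-/

open Polynomial

namespace Polynomial

variable {S : Type*} [Semiring S] {r : ℕ}

/-- `c i` is the coefficient of `X ^ (r - 1 - i)`: `c` lists the coefficients from the top down,
like `A₁, …, A_r` in `λ^r + A₁λ^{r-1} + ⋯ + A_r`. -/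
noncomputable def monicOfCoeffs (c : Fin r → S) : S[X] :=
  X ^ r + ∑ i : Fin r, monomial (r - 1 - i) (c i)

theorem degree_sum_monomial_lt (c : Fin r → S) :
    (∑ i : Fin r, monomial (r - 1 - i) (c i)).degree < r := by
  refine (degree_sum_le _ _).trans_lt ((Finset.sup_lt_iff (WithBot.bot_lt_coe r)).2 ?_)
  intro i _
  exact (degree_monomial_le _ _).trans_lt (WithBot.coe_lt_coe.2 (by omega : r - 1 - (i : ℕ) < r))

theorem monic_monicOfCoeffs (c : Fin r → S) : (monicOfCoeffs c).Monic :=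
  monic_X_pow_add (degree_sum_monomial_lt c)

theorem natDegree_monicOfCoeffs [Nontrivial S] (c : Fin r → S) :
    (monicOfCoeffs c).natDegree = r := by
  rw [monicOfCoeffs, natDegree_add_eq_left_of_degree_lt, natDegree_X_pow]
  simpa only [degree_X_pow] using degree_sum_monomial_lt c

theorem coeff_monicOfCoeffs_self (c : Fin r → S) : (monicOfCoeffs c).coeff r = 1 := by
  rw [monicOfCoeffs, coeff_add, coeff_X_pow_self, finsetSum_coeff, Finset.sum_eq_zero, add_zero]
  exact fun i _ => coeff_monomial_of_ne _ (by omega)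

theorem coeff_monicOfCoeffs (c : Fin r → S) (m : Fin r) :
    (monicOfCoeffs c).coeff (r - 1 - m) = c m := by
  rw [monicOfCoeffs, coeff_add, coeff_X_pow, if_neg (by omega), zero_add, finsetSum_coeff,
    Finset.sum_eq_single m]
  · exact coeff_monomial_same _ _
  · intro i _ hne
    exact coeff_monomial_of_ne _ (fun h => hne (Fin.ext (by omega)))
  · exact fun h => absurd (Finset.mem_univ m) h

theorem C_mul_monicOfCoeffs_mul_C {a b : S} (hab : a * b = 1) (c : Fin r → S) :
    C a * monicOfCoeffs c * C b = monicOfCoeffs (fun i => a * c i * b) := by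
  rw [monicOfCoeffs, monicOfCoeffs, mul_add, add_mul, Finset.mul_sum, Finset.sum_mul,
    ← (commute_X_pow (C a) r).eq, mul_assoc, ← C_mul, hab, C_1, mul_one]
  simp only [C_mul_monomial, monomial_mul_C]

theorem Monic.eq_C_of_natDegree_C_mul_mul_le {a : S} {q Q : S[X]} (hq : q.Monic) (ha : IsUnit a)
    (hdeg : (C a * q * Q).natDegree ≤ q.natDegree) : Q = C (Q.coeff 0) := by
  obtain rfl | hQ := eq_or_ne Q 0
  · simp
  rw [mul_assoc, natDegree_C_mul_of_isUnit ha, hq.natDegree_mul' hQ] at hdeg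
  exact eq_C_of_natDegree_eq_zero (by omega)

theorem exists_mul_eq_one_of_monicOfCoeffs_eq_C_mul_mul {a : S} {Q : S[X]} {c d : Fin r → S}
    (ha : IsUnit a) (h : monicOfCoeffs c = C a * monicOfCoeffs d * Q) :
    ∃ b, a * b = 1 ∧ ∀ i, c i = a * d i * b := by
  nontriviality S
  have hQ : Q = C (Q.coeff 0) := (monic_monicOfCoeffs d).eq_C_of_natDegree_C_mul_mul_le ha
    (by rw [← h, natDegree_monicOfCoeffs, natDegree_monicOfCoeffs])
  have hcoeff (k : ℕ) : (monicOfCoeffs c).coeff k = a * (monicOfCoeffs d).coeff k * Q.coeff 0 := by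
    rw [h, hQ, coeff_mul_C, coeff_C_mul, coeff_C_zero]
  refine ⟨Q.coeff 0, ?_, fun i => by simpa only [coeff_monicOfCoeffs] using hcoeff (r - 1 - i)⟩
  simpa only [coeff_monicOfCoeffs_self, mul_one, eq_comm] using hcoeff r

end Polynomial

theorem matPolyEquiv_eq_monicOfCoeffs {R n : Type*} [CommRing R] [Fintype n] [DecidableEq n]
    {r : ℕ} (c : Fin r → Matrix n n R) :
    matPolyEquiv ((X ^ r : R[X]) • (1 : Matrix n n R[X]) +
      ∑ i : Fin r, (X ^ (r - 1 - (i : ℕ)) : R[X]) • (c i).map C) = monicOfCoeffs c := by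
  simp only [map_add, map_sum, matPolyEquiv_map_smul, map_one, one_mul, matPolyEquiv_map_C,
    Polynomial.map_pow, map_X, X_pow_mul, C_mul_X_pow_eq_monomial, monicOfCoeffs]

/-- The families of coefficients `{A₁, …, A_r}` and `{B₁, …, B_r}` of two monic `n × n`
matrix polynomials `A(λ) = Iₙλ^r + Σ Aᵢλ^{r-i}` and `B(λ) = Iₙλ^r + Σ Bᵢλ^{r-i}` over `ℂ`
are simultaneously similar over `ℂ` if and only if `A(λ)` and `B(λ)` are semi-scalar
equivalent. -/
theorem families_similar_iff_semi_scalar_equivalent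
    {n r : ℕ}
    (Acoef Bcoef : Fin r → Matrix (Fin n) (Fin n) ℂ)
    (A B : Matrix (Fin n) (Fin n) ℂ[X])
    (hAdef : A = (X ^ r : ℂ[X]) • (1 : Matrix (Fin n) (Fin n) ℂ[X]) +
      ∑ i : Fin r, (X ^ (r - 1 - (i : ℕ)) : ℂ[X]) • (Acoef i).map Polynomial.C)
    (hBdef : B = (X ^ r : ℂ[X]) • (1 : Matrix (Fin n) (Fin n) ℂ[X]) +
      ∑ i : Fin r, (X ^ (r - 1 - (i : ℕ)) : ℂ[X]) • (Bcoef i).map Polynomial.C) :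
    (∃ T : Matrix (Fin n) (Fin n) ℂ, IsUnit T.det ∧
        ∀ i : Fin r, Acoef i = T * Bcoef i * T⁻¹) ↔
    (∃ P : Matrix (Fin n) (Fin n) ℂ, IsUnit P.det ∧
      ∃ Q : Matrix (Fin n) (Fin n) ℂ[X], IsUnit Q.det ∧
        A = P.map Polynomial.C * B * Q) := by
  have hA : matPolyEquiv A = monicOfCoeffs Acoef := hAdef ▸ matPolyEquiv_eq_monicOfCoeffs Acoef
  have hB : matPolyEquiv B = monicOfCoeffs Bcoef := hBdef ▸ matPolyEquiv_eq_monicOfCoeffs Bcoef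
  constructor
  · rintro ⟨T, hT, hsim⟩
    refine ⟨T, hT, T⁻¹.map C, ?_, matPolyEquiv.injective ?_⟩
    · exact (RingHom.map_det C T⁻¹).symm ▸ (Matrix.isUnit_nonsing_inv_det T hT).map C
    · rw [map_mul, map_mul, matPolyEquiv_map_C, matPolyEquiv_map_C, hA, hB,
        C_mul_monicOfCoeffs_mul_C (Matrix.mul_nonsing_inv T hT)]
      exact congrArg monicOfCoeffs (funext hsim)
  · rintro ⟨P, hP, Q, -, hPQ⟩
    have h := congrArg matPolyEquiv hPQ
    rw [map_mul, map_mul, matPolyEquiv_map_C, hA, hB] at h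
    obtain ⟨b, hPb, hcoef⟩ :=
      exists_mul_eq_one_of_monicOfCoeffs_eq_C_mul_mul ((Matrix.isUnit_iff_isUnit_det P).2 hP) h
    exact ⟨P, hP, fun i => by rw [hcoef i, Matrix.inv_eq_right_inv hPb]⟩
end

section
/- Let A(λ) = [[λ, λ], [λ²+1, λ²+1]] ∈ M_{2×2}(ℚ[λ]). Then there do not exist an invertible constant matrix P ∈ GL(2, ℚ), an invertible matrix Q(λ) ∈ GL(2, ℚ[λ]), and a polynomial s(λ) ∈ ℚ[λ] such that P·A(λ)·Q(λ) = [[1, 0], [s(λ), 0]]. -/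
open Polynomial

/-! The first row of `P · A(λ)` is `f · (1, 1)` with `f = a λ + b (λ² + 1)` for the first row
`(a, b)` of `P`, so the `(0, 0)` entry of `P · A(λ) · Q(λ)` is a multiple of `f`. If it were `1`,
`f` would be a unit of `ℚ[λ]`, i.e. a nonzero constant; but the span of `λ` and `λ² + 1`
contains no nonzero constant. -/

theorem Matrix.mul_of_eq_columns_mul_apply_zero_zero {R : Type*} [CommRing R]
    (P Q : Matrix (Fin 2) (Fin 2) R) (p q : R) :
    (P * !![p, p; q, q] * Q) 0 0 = (P 0 0 * p + P 0 1 * q) * (Q 0 0 + Q 1 0) := by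
  simp only [Matrix.mul_apply, Fin.sum_univ_two, Matrix.of_apply, Matrix.cons_val',
    Matrix.cons_val_zero, Matrix.cons_val_one, Matrix.empty_val', Matrix.cons_val_fin_one]
  ring

theorem Polynomial.not_isUnit_C_mul_X_add_C_mul_X_sq_add_one {R : Type*} [CommRing R]
    [IsDomain R] (a b : R) : ¬ IsUnit (C a * X + C b * (X ^ 2 + 1)) := by
  intro hu
  have hdeg := natDegree_eq_zero_of_isUnit hu
  have h1 := coeff_eq_zero_of_natDegree_lt (p := C a * X + C b * (X ^ 2 + 1)) (n := 1) (by omega)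
  have h2 := coeff_eq_zero_of_natDegree_lt (p := C a * X + C b * (X ^ 2 + 1)) (n := 2) (by omega)
  obtain rfl : a = 0 := by simpa [coeff_X_pow, coeff_one] using h1
  obtain rfl : b = 0 := by simpa [coeff_X_pow, coeff_one] using h2
  simp at hu

/-- **Example 1.1.** For the singular matrix `A(λ) = [[λ, λ], [λ² + 1, λ² + 1]]` over
`ℚ[λ]` there do not exist an invertible constant matrix `P ∈ GL(2, ℚ)`, an invertible
matrix `Q(λ) ∈ GL(2, ℚ[λ])` and a polynomial `s(λ)` such that
`P·A(λ)·Q(λ) = [[1, 0], [s(λ), 0]]`. -/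
theorem no_triangular_reduction_of_singular_example :
    ¬ ∃ (P : Matrix (Fin 2) (Fin 2) ℚ) (Q : Matrix (Fin 2) (Fin 2) ℚ[X]) (s : ℚ[X]),
      IsUnit P.det ∧ IsUnit Q.det ∧
        P.map Polynomial.C *
          (!![X, X; X ^ 2 + 1, X ^ 2 + 1] : Matrix (Fin 2) (Fin 2) ℚ[X]) * Q =
          !![1, 0; s, 0] := by
  rintro ⟨P, Q, s, -, -, hEq⟩
  have h00 := congrArg (· 0 0) hEq
  simp only [Matrix.mul_of_eq_columns_mul_apply_zero_zero, Matrix.map_apply, Matrix.of_apply,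
    Matrix.cons_val', Matrix.cons_val_zero, Matrix.empty_val', Matrix.cons_val_fin_one] at h00
  exact not_isUnit_C_mul_X_add_C_mul_X_sq_add_one (P 0 0) (P 0 1) (.of_mul_eq_one _ h00)
end

section
/- For a ∈ ℂ let A_a(λ) = [[1, 0], [λ² + aλ, λ⁴]] ∈ M_{2×2}(ℂ[λ]). Then: (i) if a, b ∈ ℂ with a ≠ b and a + b ≠ 0, the matrices A_a(λ) and A_b(λ) are not semi-scalar equivalent; (ii) if a ≠ 0, the matrices A_a(λ) and A_{−a}(λ) are semi-scalar equivalent. -/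
open Polynomial

/-- For `a ∈ ℂ`, the matrix `A_a(λ) = [[1, 0], [λ² + aλ, λ⁴]] ∈ M₂(ℂ[λ])`. -/
noncomputable def exampleMatrix (a : ℂ) : Matrix (Fin 2) (Fin 2) ℂ[X] :=
  !![1, 0; X ^ 2 + Polynomial.C a * X, X ^ 4]

/-- **Example 4.1.** (i) If `a ≠ b` and `a + b ≠ 0`, then `A_a(λ)` and `A_b(λ)` are not
semi-scalar equivalent. (ii) If `a ≠ 0`, then `A_a(λ)` and `A_{-a}(λ)` are semi-scalar
equivalent. -/
theorem exampleMatrix_semi_scalar_equivalence :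
    (∀ a b : ℂ, a ≠ b → a + b ≠ 0 →
      ¬ ∃ P : Matrix (Fin 2) (Fin 2) ℂ, IsUnit P.det ∧
        ∃ Q : Matrix (Fin 2) (Fin 2) ℂ[X], IsUnit Q.det ∧
          exampleMatrix a = P.map Polynomial.C * exampleMatrix b * Q) ∧
    (∀ a : ℂ, a ≠ 0 →
      ∃ P : Matrix (Fin 2) (Fin 2) ℂ, IsUnit P.det ∧
        ∃ Q : Matrix (Fin 2) (Fin 2) ℂ[X], IsUnit Q.det ∧
          exampleMatrix a = P.map Polynomial.C * exampleMatrix (-a) * Q) := by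
  constructor
  · rintro a b hab hsum ⟨P, hP, Q, hQ, hE⟩
    -- Multiply on the left by `(P⁻¹).map C`.
    have hPinv : (P⁻¹).map (C : ℂ →+* ℂ[X]) * P.map C = 1 := by
      rw [← Matrix.map_mul, Matrix.nonsing_inv_mul P hP]
      simp
    have h' : (P⁻¹).map (C : ℂ →+* ℂ[X]) * exampleMatrix a = exampleMatrix b * Q := by
      rw [hE, ← Matrix.mul_assoc, ← Matrix.mul_assoc, hPinv, Matrix.one_mul]
    have e00 : C (P⁻¹ 0 0) + C (P⁻¹ 0 1) * (X ^ 2 + C a * X) = Q 0 0 := by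
      have := congrFun (congrFun h' 0) 0
      simpa [exampleMatrix, Matrix.mul_apply, Fin.sum_univ_two, Matrix.map_apply] using this
    have e01 : C (P⁻¹ 0 1) * X ^ 4 = Q 0 1 := by
      have := congrFun (congrFun h' 0) 1
      simpa [exampleMatrix, Matrix.mul_apply, Fin.sum_univ_two, Matrix.map_apply] using this
    have e10 : C (P⁻¹ 1 0) + C (P⁻¹ 1 1) * (X ^ 2 + C a * X) =
        (X ^ 2 + C b * X) * Q 0 0 + X ^ 4 * Q 1 0 := by
      have := congrFun (congrFun h' 1) 0
      simpa [exampleMatrix, Matrix.mul_apply, Fin.sum_univ_two, Matrix.map_apply] using this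
    -- Extract coefficient conditions from the (1,0) entry.
    have hN : Q 1 0 * X ^ 4 = C (P⁻¹ 1 0)
        + C (P⁻¹ 1 1 * a - P⁻¹ 0 0 * b) * X
        + C (P⁻¹ 1 1 - P⁻¹ 0 0 - P⁻¹ 0 1 * a * b) * X ^ 2
        + C (-(P⁻¹ 0 1 * (a + b))) * X ^ 3
        + C (-(P⁻¹ 0 1)) * X ^ 4 := by
      simp only [map_sub, map_mul, map_add, map_neg]
      linear_combination (X ^ 2 + C b * X) * e00 - e10
    have c1 := congrArg (fun f : ℂ[X] => f.coeff 1) hN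
    have c2 := congrArg (fun f : ℂ[X] => f.coeff 2) hN
    have c3 := congrArg (fun f : ℂ[X] => f.coeff 3) hN
    simp [Polynomial.coeff_mul_X_pow', coeff_C] at c1 c2 c3
    -- Deduce that the first row of `P⁻¹` (hence of `Q`) vanishes.
    have hq0 : P⁻¹ 0 1 = 0 := c3.resolve_right hsum
    have hs : P⁻¹ 1 1 = P⁻¹ 0 0 := by
      rw [hq0] at c2; linear_combination -c2
    have hp0 : P⁻¹ 0 0 = 0 := by
      rw [hs] at c1
      have h1 : P⁻¹ 0 0 * (a - b) = 0 := by linear_combination -c1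
      rcases mul_eq_zero.mp h1 with h | h
      · exact h
      · exact absurd (sub_eq_zero.mp h) hab
    -- Hence the first row of `Q` vanishes, so `det Q = 0`, contradiction.
    have hQ00 : Q 0 0 = 0 := by rw [← e00, hp0, hq0]; simp
    have hQ01 : Q 0 1 = 0 := by rw [← e01, hq0]; simp
    rw [Matrix.det_fin_two, hQ00, hQ01] at hQ
    simp at hQ
  · intro a ha
    set q : ℂ := 2 / a ^ 2 with hq
    have ha2 : a ^ 2 ≠ 0 := pow_ne_zero _ ha
    have hqa : q * a ^ 2 = 2 := div_mul_cancel₀ 2 ha2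
    have hC : (C q) * (C a) ^ 2 = 2 := by
      rw [← C_pow, ← C_mul, hqa]; exact map_ofNat C 2
    refine ⟨!![1, q; 0, -1], ?_, ?_⟩
    · have : (!![1, q; 0, -1] : Matrix (Fin 2) (Fin 2) ℂ).det = -1 := by
        rw [Matrix.det_fin_two_of]; ring
      rw [this]; exact isUnit_one.neg
    refine ⟨!![1 + C q * (X ^ 2 + C a * X), C q * X ^ 4;
               -C q, -1 - C q * (X ^ 2 - C a * X)], ?_, ?_⟩
    · have : (!![1 + C q * (X ^ 2 + C a * X), C q * X ^ 4;
               -C q, -1 - C q * (X ^ 2 - C a * X)] : Matrix (Fin 2) (Fin 2) ℂ[X]).det = -1 := by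
        rw [Matrix.det_fin_two_of]
        linear_combination (C q * X ^ 2) * hC
      rw [this]; exact isUnit_one.neg
    · refine Matrix.ext fun i j => ?_
      fin_cases i <;> fin_cases j <;>
        simp [exampleMatrix, Matrix.mul_apply, Fin.sum_univ_two, Matrix.map_apply]
      · linear_combination (C q * X ^ 2) * hC
      · ring
      · linear_combination (-X ^ 2 : ℂ[X]) * hC
      · ring
end
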